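/- Let n be an integer with n ≢ 0 (mod 4). Then the rank of the matrix (A₂ mod 3)^n − I over the field ℤ/3ℤ equals 2. -/

import Mathlib

/-!
The constant vector is a trivial coloring, so it is fixed by `A₂` and hence lies in the kernel of
`A₂ ^ n - 1`; thus the rank is at most `2`. Modulo `3` the characteristic polynomial of `A₂` is
`(X - 1) (X ^ 2 + 1)`, so `A₂ mod 3` has order `4` and `A₂ ^ n` only depends on `n mod 4`. For the
three nonzero residues, the leading `2 × 2` minor of `A₂ ^ n - 1` is nonzero, so the rank is at
least `2`.
-/

/-- The coloring matrix `A_{σ₁σ₂⁻¹}` of the 3-braid `σ₁σ₂⁻¹`, reduced modulo `3`. -/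
def A₂mod3 : Matrix (Fin 3) (Fin 3) (ZMod 3) := !![0, 1, 0; -2, 4, -1; -1, 2, 0]

namespace Matrix

variable {m n R K : Type*} [Fintype n]

theorem rank_lt_card_of_mulVec_eq_zero [Field K] {M : Matrix m n K} {v : n → K} (hv : v ≠ 0)
    (hMv : M *ᵥ v = 0) : M.rank < Fintype.card n := by
  have hker : 1 ≤ Module.finrank K (LinearMap.ker M.mulVecLin) :=
    Submodule.one_le_finrank_iff.mpr ((Submodule.ne_bot_iff _).mpr ⟨v, hMv, hv⟩)
  have hsum := LinearMap.finrank_range_add_finrank_ker M.mulVecLin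
  rw [Module.finrank_fintype_fun_eq_card] at hsum
  rw [rank]
  omega

theorem pow_mulVec_eq_self [DecidableEq n] [CommSemiring R] {A : Matrix n n R} {v : n → R}
    (hAv : A *ᵥ v = v) (k : ℕ) : A ^ k *ᵥ v = v := by
  induction k with
  | zero => simp
  | succ k ih => rw [pow_succ, ← mulVec_mulVec, hAv, ih]

theorem zpow_eq_pow_toNat_emod [DecidableEq n] [CommRing R] {A : Matrix n n R} {k : ℕ}
    (hk : k ≠ 0) (hA : A ^ k = 1) (m : ℤ) : A ^ m = A ^ (m % k).toNat := by
  set u := (IsUnit.of_pow_eq_one hA hk).unit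
  have hu : u ^ k = 1 := Units.ext (by simpa [u] using hA)
  have hnonneg : 0 ≤ m % k := Int.emod_nonneg m (by exact_mod_cast hk)
  calc A ^ m = ((u ^ m : (Matrix n n R)ˣ) : Matrix n n R) := (coe_units_zpow u m).symm
    _ = ((u ^ (m % k : ℤ) : (Matrix n n R)ˣ) : Matrix n n R) := by rw [← zpow_eq_zpow_emod' m hu]
    _ = A ^ (m % k).toNat := by
      rw [coe_units_zpow, ← Int.toNat_of_nonneg hnonneg, zpow_natCast, Int.toNat_natCast]
      rfl

end Matrix

open Matrix

theorem A₂mod3_pow_four : A₂mod3 ^ 4 = 1 := by decide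

theorem A₂mod3_mulVec_const_one : A₂mod3 *ᵥ (fun _ => 1) = fun _ => 1 := by decide

theorem det_submatrix_castSucc_A₂mod3_pow_sub_one_ne_zero :
    ∀ k < 4, k ≠ 0 → ((A₂mod3 ^ k - 1).submatrix Fin.castSucc Fin.castSucc).det ≠ 0 := by
  decide

/-- For an integer `n` with `n ≢ 0 (mod 4)`, the rank of `(A₂ mod 3) ^ n - I`
over `ℤ/3ℤ` equals `2`. -/
theorem rank_A₂mod3_zpow_sub_one (n : ℤ) (hn : ¬ (4 : ℤ) ∣ n) :
    (A₂mod3 ^ n - 1).rank = 2 := by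
  rw [zpow_eq_pow_toNat_emod four_ne_zero A₂mod3_pow_four n]
  set k := (n % 4).toNat
  have hk : k < 4 ∧ k ≠ 0 := by omega
  have hker : (A₂mod3 ^ k - 1) *ᵥ (fun _ => 1) = 0 := by
    rw [sub_mulVec, pow_mulVec_eq_self A₂mod3_mulVec_const_one, one_mulVec, sub_self]
  apply le_antisymm
  · exact Nat.lt_succ_iff.mp
      (rank_lt_card_of_mulVec_eq_zero (Function.ne_iff.mpr ⟨0, one_ne_zero⟩) hker)
  · calc 2 = ((A₂mod3 ^ k - 1).submatrix Fin.castSucc Fin.castSucc).rank := by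
          rw [rank_of_det_ne_zero (det_submatrix_castSucc_A₂mod3_pow_sub_one_ne_zero k hk.1 hk.2),
            Fintype.card_fin]
      _ ≤ (A₂mod3 ^ k - 1).rank := rank_submatrix_le _ _ _
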